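/- arXiv:1509.00300 — 6 statements merged into one kernel-verified Lean document; each statement's English description precedes it below -/
import Mathlib

section
/- Let L be a Leibniz algebra over F, (l,r,V) a representation of L, and x ∈ L. Then for every integer k ≥ 1 one has l_x^k = (-1)^{k+1} l_x ∘ r_x^{k-1}. In particular, if r_x is a nilpotent endomorphism of V, then l_x is also nilpotent. -/
/-! Comparing the two representation axioms for `l_{[x,x]}` gives `l_x l_x = -l_x r_x`, i.e.
`l_x (l_x + r_x) = 0`. Pushing one factor `l_x` at a time through a power then turns
`l_x^{n+1}` into `l_x (-r_x)^n`, which vanishes as soon as `r_x^n` does. -/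

section Ring

variable {R : Type*} [Ring R] {a c : R}

theorem pow_succ_eq_mul_neg_pow_of_mul_add_eq_zero (h : a * (a + c) = 0) (n : ℕ) :
    a ^ (n + 1) = a * (-c) ^ n := by
  have hsq : a * a = a * -c := by
    rwa [mul_add, add_eq_zero_iff_eq_neg, ← mul_neg] at h
  induction n with
  | zero => simp
  | succ n ih =>
    calc a ^ (n + 1 + 1) = a * a * (-c) ^ n := by rw [pow_succ', ih, mul_assoc]
      _ = a * (-c) ^ (n + 1) := by rw [hsq, mul_assoc, ← pow_succ']

theorem IsNilpotent.of_mul_add_eq_zero (h : a * (a + c) = 0) (hc : IsNilpotent c) :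
    IsNilpotent a := by
  obtain ⟨n, hn⟩ := hc.neg
  exact ⟨n + 1, by rw [pow_succ_eq_mul_neg_pow_of_mul_add_eq_zero h, hn, mul_zero]⟩

end Ring

theorem left_action_power_formula_general
    (F L V : Type*) [Field F]
    [AddCommGroup L] [Module F L]
    [AddCommGroup V] [Module F V]
    (b : L →ₗ[F] L →ₗ[F] L)
    (l r : L →ₗ[F] Module.End F V)
    (hlr : ∀ x y : L, l (b x y) = r y * l x - l x * r y)
    (hll : ∀ x y : L, l (b x y) = r y * l x + l x * l y)
    (x : L) :
    (∀ k : ℕ, 1 ≤ k → (l x) ^ k = ((-1 : F) ^ (k + 1)) • (l x * (r x) ^ (k - 1))) ∧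
    (IsNilpotent (r x) → IsNilpotent (l x)) := by
  have hlx : l x * (l x + r x) = 0 := by
    have h := (hlr x x).symm.trans (hll x x)
    rw [← sub_eq_zero] at h
    rw [mul_add, ← neg_eq_zero, ← h]
    abel
  refine ⟨fun k hk => ?_, IsNilpotent.of_mul_add_eq_zero hlx⟩
  obtain ⟨n, rfl⟩ := Nat.exists_eq_add_of_le' hk
  rw [pow_succ_eq_mul_neg_pow_of_mul_add_eq_zero hlx, ← neg_one_smul F (r x), smul_pow,
    mul_smul_comm, Nat.add_sub_cancel]
  congr 1
  ring

/-- For a representation `(l, r, V)` of a Leibniz algebra `L` and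
`x ∈ L`, one has `l_x^k = (-1)^{k+1} l_x ∘ r_x^{k-1}` for every `k ≥ 1`;
in particular, if `r_x` is nilpotent then so is `l_x`. -/
theorem left_action_power_formula
    (F L V : Type*) [Field F]
    [AddCommGroup L] [Module F L]
    [AddCommGroup V] [Module F V]
    (b : L →ₗ[F] L →ₗ[F] L)
    (hb : ∀ x y z : L, b x (b y z) = b (b x y) z - b (b x z) y)
    (l r : L →ₗ[F] Module.End F V)
    (hr : ∀ x y : L, r (b x y) = r y * r x - r x * r y)
    (hlr : ∀ x y : L, l (b x y) = r y * l x - l x * r y)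
    (hll : ∀ x y : L, l (b x y) = r y * l x + l x * l y)
    (x : L) :
    (∀ k : ℕ, 1 ≤ k → (l x) ^ k = ((-1 : F) ^ (k + 1)) • (l x * (r x) ^ (k - 1))) ∧
    (IsNilpotent (r x) → IsNilpotent (l x)) :=
  left_action_power_formula_general F L V b l r hlr hll x
end

section
/- Let L be a Leibniz algebra over F, (l,r,V) a representation of L, A a subspace of L, and x an element of the normalizer n_L(A). Then for every integer k ≥ 0 and every a ∈ A, the endomorphism δ_{k+1} = r_a^{k+1}∘r_x - r_x∘r_a^{k+1} belongs to the subspace (r_A)^{k+1} of End(V). -/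
/-! `r_x` maps into `r_A` under the commutator with any `r_a`, because `[r_a, r_x] = r_{[x,a]}`
and `x` normalizes `A`; the derivation rule `[p^(k+1), q] = p [p^k, q] + [p, q] p^k` then puts
`[r_a^(k+1), r_x]` into `(r_A)^(k+1)` by induction on `k`. -/

theorem Submodule.pow_succ_mul_sub_mul_pow_succ_mem_pow {R S : Type*} [CommSemiring R] [Ring S]
    [Algebra R S] {M : Submodule R S} {p q : S} (hp : p ∈ M) (hpq : p * q - q * p ∈ M) (k : ℕ) :
    p ^ (k + 1) * q - q * p ^ (k + 1) ∈ M ^ (k + 1) := by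
  induction k with
  | zero => simpa using hpq
  | succ k ih =>
    have leibniz : p ^ (k + 2) * q - q * p ^ (k + 2)
        = p * (p ^ (k + 1) * q - q * p ^ (k + 1)) + (p * q - q * p) * p ^ (k + 1) := by
      rw [pow_succ' p (k + 1)]; noncomm_ring
    rw [leibniz, pow_succ' M (k + 1)]
    exact add_mem (mul_mem_mul hp ih) (mul_mem_mul hpq (pow_mem_pow M hp (k + 1)))

theorem delta_mem_pow_general
    (F L V : Type*) [Field F]
    [AddCommGroup L] [Module F L]
    [AddCommGroup V] [Module F V]
    (b : L →ₗ[F] L →ₗ[F] L)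
    (r : L →ₗ[F] Module.End F V)
    (hr : ∀ x y : L, r (b x y) = r y * r x - r x * r y)
    (A : Submodule F L) (x : L)
    (hx : ∀ a ∈ A, b x a ∈ A ∧ b a x ∈ A) :
    ∀ (k : ℕ), ∀ a ∈ A,
      (r a) ^ (k + 1) * r x - r x * (r a) ^ (k + 1) ∈ (A.map r) ^ (k + 1) := by
  intro k a ha
  have hra : r a ∈ A.map r := Submodule.mem_map_of_mem ha
  have hcomm : r a * r x - r x * r a ∈ A.map r := hr x a ▸ Submodule.mem_map_of_mem (hx a ha).1
  exact Submodule.pow_succ_mul_sub_mul_pow_succ_mem_pow hra hcomm k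

/-- Let `(l,r,V)` be a representation of a Leibniz algebra `L`,
`A` a subspace of `L` and `x ∈ n_L(A)` (the normalizer of `A`).  Then for every
`k ≥ 0` and every `a ∈ A`, the endomorphism
`δ_{k+1} = r_a^{k+1}∘r_x - r_x∘r_a^{k+1}` lies in `(r_A)^{k+1}`,
where `r_A = span {r_a : a ∈ A} = A.map r` and powers of subspaces of `End(V)`
are spans of products (compositions). -/
theorem delta_mem_pow
    (F L V : Type*) [Field F]
    [AddCommGroup L] [Module F L]
    [AddCommGroup V] [Module F V]
    (b : L →ₗ[F] L →ₗ[F] L)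
    (hb : ∀ x y z : L, b x (b y z) = b (b x y) z - b (b x z) y)
    (l r : L →ₗ[F] Module.End F V)
    (hr : ∀ x y : L, r (b x y) = r y * r x - r x * r y)
    (hlr : ∀ x y : L, l (b x y) = r y * l x - l x * r y)
    (hll : ∀ x y : L, l (b x y) = r y * l x + l x * l y)
    (A : Submodule F L) (x : L)
    (hx : ∀ a ∈ A, b x a ∈ A ∧ b a x ∈ A) :
    ∀ (k : ℕ), ∀ a ∈ A,
      (r a) ^ (k + 1) * r x - r x * (r a) ^ (k + 1) ∈ (A.map r) ^ (k + 1) :=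
  delta_mem_pow_general F L V b r hr A x hx
end

section
/- Let L be a Leibniz algebra over F, (l,r,V) a representation of L, A a subspace of L, and x an element of the normalizer n_L(A). Then for every integer k ≥ 0 and every a ∈ A, the endomorphism β_{k+1} = r_x^{k+1}∘r_a - r_a∘r_x^{k+1} belongs to the subspace r_A r_x^k + r_A r_x^{k-1} + ⋯ + r_A r_x + r_A of End(V), where r_A r_x^j denotes the span of {r_b∘r_x^j : b ∈ A}. -/
/-!
With `c = r_x r_a - r_a r_x = r_{[a,x]}`, one has
`r_x^{k+2} r_a - r_a r_x^{k+2} = (r_x^{k+1} r_a - r_a r_x^{k+1}) r_x + (r_x^{k+1} c - c r_x^{k+1}) + c r_x^{k+1}`,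
and `c ∈ r_A` because `x` normalizes `A`. So induction on `k` works in any algebra, for any
subspace `M` stable under the commutator with an element `X`.
-/

open Finset Submodule

section CommutatorPowers

variable {F R : Type*} [CommSemiring F] [Ring R] [Algebra F R] {M : Submodule F R} {X : R}

theorem mul_pow_mem_iSup_range {m : R} (hm : m ∈ M) {j k : ℕ} (hjk : j < k) :
    m * X ^ j ∈ ⨆ i ∈ range k, M * span F {X ^ i} :=
  le_iSup₂ (f := fun i (_ : i ∈ range k) => M * span F {X ^ i}) j (mem_range.2 hjk)
    (mul_mem_mul hm (mem_span_singleton_self _))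

theorem iSup_range_mul_span_le (M : Submodule F R) (X : R) (k : ℕ) :
    (⨆ i ∈ range k, M * span F {X ^ i}) * span F {X} ≤
      ⨆ i ∈ range (k + 1), M * span F {X ^ i} := by
  simp only [iSup_mul]
  refine iSup₂_le fun i hi => ?_
  rw [mul_assoc, span_mul_span, Set.singleton_mul_singleton, ← pow_succ]
  exact le_iSup₂ (f := fun i (_ : i ∈ range (k + 1)) => M * span F {X ^ i}) (i + 1)
    (by simpa using hi)

theorem iSup_range_mono (M : Submodule F R) (X : R) {k n : ℕ} (hkn : k ≤ n) :
    ⨆ i ∈ range k, M * span F {X ^ i} ≤ ⨆ i ∈ range n, M * span F {X ^ i} :=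
  biSup_mono fun _ hi => range_mono hkn hi

theorem pow_succ_mul_sub_mul_pow_succ_mem (hM : ∀ m ∈ M, X * m - m * X ∈ M) (k : ℕ) :
    ∀ m ∈ M, X ^ (k + 1) * m - m * X ^ (k + 1) ∈ ⨆ i ∈ range (k + 1), M * span F {X ^ i} := by
  induction k with
  | zero =>
    intro m hm
    simpa using mul_pow_mem_iSup_range (X := X) (hM m hm) zero_lt_one
  | succ k ih =>
    intro m hm
    set c := X * m - m * X
    have hc : c ∈ M := hM m hm
    have expand : X ^ (k + 2) * m - m * X ^ (k + 2) =
        (X ^ (k + 1) * m - m * X ^ (k + 1)) * X + (X ^ (k + 1) * c - c * X ^ (k + 1))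
          + c * X ^ (k + 1) := by
      simp only [c, pow_succ X (k + 1)]
      noncomm_ring
    rw [expand]
    refine add_mem (add_mem ?_ ?_) (mul_pow_mem_iSup_range hc (k + 1).lt_succ_self)
    · exact iSup_range_mul_span_le M X (k + 1)
        (mul_mem_mul (ih m hm) (mem_span_singleton_self X))
    · exact iSup_range_mono M X k.succ.le_succ (ih c hc)

end CommutatorPowers

theorem beta_mem_sum_general
    (F L V : Type*) [Field F]
    [AddCommGroup L] [Module F L]
    [AddCommGroup V] [Module F V]
    (b : L →ₗ[F] L →ₗ[F] L)
    (r : L →ₗ[F] Module.End F V)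
    (hr : ∀ x y : L, r (b x y) = r y * r x - r x * r y)
    (A : Submodule F L) (x : L)
    (hx : ∀ a ∈ A, b x a ∈ A ∧ b a x ∈ A) :
    ∀ (k : ℕ), ∀ a ∈ A,
      (r x) ^ (k + 1) * r a - r a * (r x) ^ (k + 1) ∈
        ⨆ j ∈ Finset.range (k + 1), A.map r * Submodule.span F {(r x) ^ j} := by
  have hrA : ∀ m ∈ A.map r, r x * m - m * r x ∈ A.map r := by
    rintro _ ⟨a, ha, rfl⟩
    exact ⟨b a x, (hx a ha).2, hr a x⟩
  exact fun k a ha => pow_succ_mul_sub_mul_pow_succ_mem hrA k (r a) (mem_map_of_mem ha)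

/-- Let `(l,r,V)` be a representation of a Leibniz algebra `L`,
`A` a subspace of `L` and `x ∈ n_L(A)`.  Then for every `k ≥ 0` and every
`a ∈ A`, the endomorphism `β_{k+1} = r_x^{k+1}∘r_a - r_a∘r_x^{k+1}` lies in
`r_A r_x^k + r_A r_x^{k-1} + ⋯ + r_A r_x + r_A`, where `r_A = A.map r` and
`r_A r_x^j` is the span of `{r_b ∘ r_x^j : b ∈ A}`. -/
theorem beta_mem_sum
    (F L V : Type*) [Field F]
    [AddCommGroup L] [Module F L]
    [AddCommGroup V] [Module F V]
    (b : L →ₗ[F] L →ₗ[F] L)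
    (hb : ∀ x y z : L, b x (b y z) = b (b x y) z - b (b x z) y)
    (l r : L →ₗ[F] Module.End F V)
    (hr : ∀ x y : L, r (b x y) = r y * r x - r x * r y)
    (hlr : ∀ x y : L, l (b x y) = r y * l x - l x * r y)
    (hll : ∀ x y : L, l (b x y) = r y * l x + l x * l y)
    (A : Submodule F L) (x : L)
    (hx : ∀ a ∈ A, b x a ∈ A ∧ b a x ∈ A) :
    ∀ (k : ℕ), ∀ a ∈ A,
      (r x) ^ (k + 1) * r a - r a * (r x) ^ (k + 1) ∈
        ⨆ j ∈ Finset.range (k + 1), A.map r * Submodule.span F {(r x) ^ j} :=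
  beta_mem_sum_general F L V b r hr A x hx
end

section
/- Let L be a Leibniz algebra over F, (l,r,V) a representation of L, A a subspace of L, and x an element of the normalizer n_L(A). Then for all integers k, p ≥ 0 one has the inclusion of subspaces of End(V): ((r_A)^p r_x^k) r_A ⊆ (r_A)^{p+1} r_x^k + (r_A)^{p+1} r_x^{k-1} + ⋯ + (r_A)^{p+1} r_x + (r_A)^{p+1}. -/
/-!
Since `x` normalizes `A`, the axiom `r_{[x,y]} = r_y r_x - r_x r_y` gives
`r_x r_a = r_a r_x - r_{[x,a]}` with `[x,a] ∈ A`, i.e. `r_x r_A ⊆ r_A r_x + r_A`. Pushing the factors of `r_x^k` one at a time to the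
right across `r_A` shows `r_x^k r_A ⊆ r_A (F r_x^k + ⋯ + F r_x + F)`, and multiplying on the left
by `(r_A)^p` gives the claim.
-/

open Finset Submodule

namespace Submodule

variable {R A : Type*}

section Semiring

variable [CommSemiring R] [Semiring A] [Algebra R A]

theorem span_pow_mul_span (u : A) (j : ℕ) :
    span R {u ^ j} * span R {u} = span R {u ^ (j + 1)} := by
  rw [span_mul_span, Set.singleton_mul_singleton, pow_succ]

theorem iSup_span_pow_mul_span_le (u : A) (k : ℕ) :
    (⨆ j ∈ range (k + 1), span R {u ^ j}) * span R {u} ≤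
      ⨆ j ∈ range (k + 2), span R {u ^ j} := by
  simp only [iSup_mul, span_pow_mul_span]
  exact iSup₂_le fun j hj =>
    le_iSup₂_of_le (j + 1) (by simpa using hj) le_rfl

theorem iSup_span_pow_mono (u : A) {k m : ℕ} (h : k ≤ m) :
    ⨆ j ∈ range k, span R {u ^ j} ≤ ⨆ j ∈ range m, span R {u ^ j} :=
  biSup_mono fun _ hj => range_subset_range.2 h hj

theorem span_pow_mul_le_mul_iSup_span_pow {S : Submodule R A} {u : A}
    (hS : span R {u} * S ≤ S * span R {u} ⊔ S) (k : ℕ) :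
    span R {u ^ k} * S ≤ S * ⨆ j ∈ range (k + 1), span R {u ^ j} := by
  induction k with
  | zero =>
    calc span R {u ^ 0} * S = S * span R {u ^ 0} := by rw [pow_zero, ← one_eq_span, one_mul, mul_one]
      _ ≤ _ := mul_le_mul_right (le_biSup (fun j => span R {u ^ j}) (mem_range.2 Nat.one_pos)) _
  | succ k ih =>
    calc span R {u ^ (k + 1)} * S = span R {u ^ k} * (span R {u} * S) := by
          rw [← span_pow_mul_span, mul_assoc]
      _ ≤ span R {u ^ k} * (S * span R {u} ⊔ S) := mul_le_mul_right hS _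
      _ = span R {u ^ k} * S * span R {u} ⊔ span R {u ^ k} * S := by
          rw [mul_sup, mul_assoc]
      _ ≤ S * (⨆ j ∈ range (k + 1), span R {u ^ j}) * span R {u} ⊔
            S * ⨆ j ∈ range (k + 1), span R {u ^ j} :=
          sup_le_sup (mul_le_mul_left ih _) ih
      _ ≤ S * ⨆ j ∈ range (k + 2), span R {u ^ j} := by
          rw [mul_assoc, ← mul_sup]
          exact mul_le_mul_right (sup_le (iSup_span_pow_mul_span_le u k)
            (iSup_span_pow_mono u (k + 1).le_succ)) _

end Semiring

theorem span_singleton_mul_le_of_sub_mem [CommRing R] [Ring A] [Algebra R A]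
    {S : Submodule R A} {u : A} (hS : ∀ s ∈ S, u * s - s * u ∈ S) :
    span R {u} * S ≤ S * span R {u} ⊔ S := by
  refine mul_le.2 fun v hv s hs => ?_
  obtain ⟨c, rfl⟩ := mem_span_singleton.1 hv
  have hus : u * s = s * u + (u * s - s * u) := by abel
  rw [smul_mul_assoc, hus]
  exact smul_mem _ c (add_mem (mem_sup_left (mul_mem_mul hs (mem_span_singleton_self u)))
    (mem_sup_right (hS s hs)))

end Submodule

theorem pow_mul_subset_general
    (F L V : Type*) [Field F]
    [AddCommGroup L] [Module F L]
    [AddCommGroup V] [Module F V]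
    (b : L →ₗ[F] L →ₗ[F] L)
    (r : L →ₗ[F] Module.End F V)
    (hr : ∀ x y : L, r (b x y) = r y * r x - r x * r y)
    (A : Submodule F L) (x : L)
    (hx : ∀ a ∈ A, b x a ∈ A ∧ b a x ∈ A) :
    ∀ (k p : ℕ),
      ((A.map r) ^ p * Submodule.span F {(r x) ^ k}) * A.map r ≤
        ⨆ j ∈ Finset.range (k + 1),
          (A.map r) ^ (p + 1) * Submodule.span F {(r x) ^ j} := by
  intro k p
  have hS : span F {r x} * A.map r ≤ A.map r * span F {r x} ⊔ A.map r := by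
    refine span_singleton_mul_le_of_sub_mem ?_
    rintro _ ⟨a, ha, rfl⟩
    exact ⟨-b x a, neg_mem (hx a ha).1, by rw [map_neg, hr, neg_sub]⟩
  calc (A.map r) ^ p * span F {r x ^ k} * A.map r
      = (A.map r) ^ p * (span F {r x ^ k} * A.map r) := mul_assoc _ _ _
    _ ≤ (A.map r) ^ p * (A.map r * ⨆ j ∈ range (k + 1), span F {r x ^ j}) :=
        mul_le_mul_right (span_pow_mul_le_mul_iSup_span_pow hS k) _
    _ = ⨆ j ∈ range (k + 1), (A.map r) ^ (p + 1) * span F {r x ^ j} := by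
        simp only [← mul_assoc, ← pow_succ, mul_iSup]

/-- Let `(l,r,V)` be a representation of a Leibniz algebra `L`,
`A` a subspace of `L` and `x ∈ n_L(A)`.  Then for all `k, p ≥ 0`:
`((r_A)^p r_x^k) r_A ⊆ (r_A)^{p+1} r_x^k + ⋯ + (r_A)^{p+1} r_x + (r_A)^{p+1}`,
where `r_A = A.map r`, products of subspaces of `End(V)` are spans of
compositions, and `S r_x^j` is the span of `{s ∘ r_x^j : s ∈ S}`. -/
theorem pow_mul_subset
    (F L V : Type*) [Field F]
    [AddCommGroup L] [Module F L]
    [AddCommGroup V] [Module F V]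
    (b : L →ₗ[F] L →ₗ[F] L)
    (hb : ∀ x y z : L, b x (b y z) = b (b x y) z - b (b x z) y)
    (l r : L →ₗ[F] Module.End F V)
    (hr : ∀ x y : L, r (b x y) = r y * r x - r x * r y)
    (hlr : ∀ x y : L, l (b x y) = r y * l x - l x * r y)
    (hll : ∀ x y : L, l (b x y) = r y * l x + l x * l y)
    (A : Submodule F L) (x : L)
    (hx : ∀ a ∈ A, b x a ∈ A ∧ b a x ∈ A) :
    ∀ (k p : ℕ),
      ((A.map r) ^ p * Submodule.span F {(r x) ^ k}) * A.map r ≤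
        ⨆ j ∈ Finset.range (k + 1),
          (A.map r) ^ (p + 1) * Submodule.span F {(r x) ^ j} :=
  pow_mul_subset_general F L V b r hr A x hx
end

section
/- Let L be a Leibniz algebra over F, (l,r,V) a representation of L, A a subspace of L, and x an element of the normalizer n_L(A). For an integer k ≥ 0 set E_k = r_A r_x^k + r_A r_x^{k-1} + ⋯ + r_A r_x + r_A. Then for every integer p ≥ 1 one has E_k^p ⊆ (r_A)^p r_x^{pk} + (r_A)^p r_x^{pk-1} + ⋯ + (r_A)^p r_x + (r_A)^p, i.e. E_k^p is contained in the sum over 0 ≤ j ≤ pk of the subspaces (r_A)^p r_x^j. -/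
/-!
Everything happens in the algebra `End F V`, with `S = r_A` and `y = r_x`. Since `x` normalizes
`A`, the commutator `r_x r_a - r_a r_x = r_{[a,x]}` lies in `r_A`, so `r_x r_A ⊆ r_A r_x + r_A`.
Iterating, `P_n r_A ⊆ r_A P_n`, where `P_n` is the span of `1, y, …, y^n`. Hence every factor
`r_A` of `(r_A P_k)^p` can be moved to the left past the powers of `y`, which gives
`(r_A P_k)^p ⊆ r_A^p P_k^p ⊆ r_A^p P_{pk}`.
-/

open Submodule

section PowersUpTo

variable {F R : Type*} [CommRing F] [Ring R] [Algebra F R]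

variable (F) in
def powersUpTo (y : R) (n : ℕ) : Submodule F R :=
  ⨆ j ∈ Finset.range (n + 1), span F {y ^ j}

variable {y : R}

theorem span_pow_le_powersUpTo {j n : ℕ} (h : j ≤ n) : span F {y ^ j} ≤ powersUpTo F y n :=
  le_iSup₂ (f := fun j (_ : j ∈ Finset.range (n + 1)) => span F {y ^ j}) j
    (Finset.mem_range_succ_iff.mpr h)

theorem one_le_powersUpTo (n : ℕ) : (1 : Submodule F R) ≤ powersUpTo F y n := by
  simpa [← one_eq_span] using span_pow_le_powersUpTo (F := F) (y := y) n.zero_le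

theorem powersUpTo_mono {m n : ℕ} (h : m ≤ n) : powersUpTo F y m ≤ powersUpTo F y n :=
  iSup₂_le fun _ hj => span_pow_le_powersUpTo ((Finset.mem_range_succ_iff.mp hj).trans h)

theorem powersUpTo_mul_powersUpTo_le (m n : ℕ) :
    powersUpTo F y m * powersUpTo F y n ≤ powersUpTo F y (m + n) := by
  simp only [powersUpTo, iSup_mul, mul_iSup]
  refine iSup₂_le fun i hi => iSup₂_le fun j hj => ?_
  rw [span_mul_span, Set.singleton_mul_singleton, ← pow_add]
  rw [Finset.mem_range_succ_iff] at hi hj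
  exact span_pow_le_powersUpTo (by omega)

variable {S : Submodule F R}

theorem span_mul_le_mul_powersUpTo_one (hS : ∀ s ∈ S, y * s - s * y ∈ S) :
    span F {y} * S ≤ S * powersUpTo F y 1 := by
  rw [mul_le]
  intro t ht s hs
  obtain ⟨c, rfl⟩ := mem_span_singleton.mp ht
  have hys : y * s = s * y ^ 1 + (y * s - s * y) * y ^ 0 := by noncomm_ring
  rw [smul_mul_assoc, hys]
  have hpow (j : ℕ) (hj : j ≤ 1) : y ^ j ∈ powersUpTo F y 1 :=
    span_pow_le_powersUpTo hj (mem_span_singleton_self _)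
  exact smul_mem _ c (add_mem (mul_mem_mul hs (hpow 1 le_rfl))
    (mul_mem_mul (hS s hs) (hpow 0 zero_le_one)))

theorem span_pow_mul_le_mul_powersUpTo (hS : ∀ s ∈ S, y * s - s * y ∈ S) (i : ℕ) :
    span F {y ^ i} * S ≤ S * powersUpTo F y i := by
  induction i with
  | zero => simpa [← one_eq_span] using mul_le_mul_right (one_le_powersUpTo 0) S
  | succ i ih =>
    calc span F {y ^ (i + 1)} * S = span F {y} * (span F {y ^ i} * S) := by
          rw [← mul_assoc, span_mul_span, Set.singleton_mul_singleton, pow_succ']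
      _ ≤ span F {y} * (S * powersUpTo F y i) := mul_le_mul_right ih _
      _ ≤ S * powersUpTo F y 1 * powersUpTo F y i := by
          rw [← mul_assoc]; exact mul_le_mul_left (span_mul_le_mul_powersUpTo_one hS) _
      _ ≤ S * powersUpTo F y (i + 1) := by
          rw [mul_assoc, add_comm]; exact mul_le_mul_right (powersUpTo_mul_powersUpTo_le 1 i) S

theorem powersUpTo_mul_le_mul_powersUpTo (hS : ∀ s ∈ S, y * s - s * y ∈ S) (n : ℕ) :
    powersUpTo F y n * S ≤ S * powersUpTo F y n := by
  simp only [powersUpTo, iSup_mul]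
  refine iSup₂_le fun j hj => (span_pow_mul_le_mul_powersUpTo hS j).trans ?_
  exact mul_le_mul_right (powersUpTo_mono (Finset.mem_range_succ_iff.mp hj)) S

theorem mul_powersUpTo_pow_le (hS : ∀ s ∈ S, y * s - s * y ∈ S) (k p : ℕ) :
    (S * powersUpTo F y k) ^ p ≤ S ^ p * powersUpTo F y (p * k) := by
  induction p with
  | zero => simpa using one_le_powersUpTo 0
  | succ p ih =>
    calc (S * powersUpTo F y k) ^ (p + 1) = (S * powersUpTo F y k) ^ p * S * powersUpTo F y k := by
          rw [pow_succ, mul_assoc]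
      _ ≤ S ^ p * powersUpTo F y (p * k) * S * powersUpTo F y k :=
          mul_le_mul_left (mul_le_mul_left ih S) _
      _ = S ^ p * (powersUpTo F y (p * k) * S) * powersUpTo F y k := by rw [mul_assoc (S ^ p)]
      _ ≤ S ^ p * (S * powersUpTo F y (p * k)) * powersUpTo F y k :=
          mul_le_mul_left (mul_le_mul_right (powersUpTo_mul_le_mul_powersUpTo hS _) _) _
      _ ≤ S ^ (p + 1) * powersUpTo F y ((p + 1) * k) := by
          rw [← mul_assoc, ← pow_succ, mul_assoc, Nat.succ_mul]
          exact mul_le_mul_right (powersUpTo_mul_powersUpTo_le _ _) _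

theorem mul_powersUpTo (y : R) (S : Submodule F R) (n : ℕ) :
    S * powersUpTo F y n = ⨆ j ∈ Finset.range (n + 1), S * span F {y ^ j} := by
  simp only [powersUpTo, mul_iSup]

end PowersUpTo

theorem Ek_pow_subset_general
    (F L V : Type*) [Field F]
    [AddCommGroup L] [Module F L]
    [AddCommGroup V] [Module F V]
    (b : L →ₗ[F] L →ₗ[F] L)
    (r : L →ₗ[F] Module.End F V)
    (hr : ∀ x y : L, r (b x y) = r y * r x - r x * r y)
    (A : Submodule F L) (x : L)
    (hx : ∀ a ∈ A, b x a ∈ A ∧ b a x ∈ A)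
    (k : ℕ) :
    ∀ p : ℕ, 1 ≤ p →
      (⨆ j ∈ Finset.range (k + 1), A.map r * Submodule.span F {(r x) ^ j}) ^ p ≤
        ⨆ j ∈ Finset.range (p * k + 1),
          (A.map r) ^ p * Submodule.span F {(r x) ^ j} := by
  intro p _
  have hcomm : ∀ s ∈ A.map r, r x * s - s * r x ∈ A.map r := by
    rintro _ ⟨a, ha, rfl⟩
    rw [← hr]
    exact mem_map_of_mem (hx a ha).2
  rw [← mul_powersUpTo, ← mul_powersUpTo]
  exact mul_powersUpTo_pow_le hcomm k p

/-- Let `(l,r,V)` be a representation of a Leibniz algebra `L`,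
`A` a subspace of `L`, `x ∈ n_L(A)`, and for `k ≥ 0` set
`E_k = r_A r_x^k + r_A r_x^{k-1} + ⋯ + r_A r_x + r_A`.  Then for every `p ≥ 1`,
`E_k^p ⊆ Σ_{0 ≤ j ≤ pk} (r_A)^p r_x^j`, where `r_A = A.map r`. -/
theorem Ek_pow_subset
    (F L V : Type*) [Field F]
    [AddCommGroup L] [Module F L]
    [AddCommGroup V] [Module F V]
    (b : L →ₗ[F] L →ₗ[F] L)
    (hb : ∀ x y z : L, b x (b y z) = b (b x y) z - b (b x z) y)
    (l r : L →ₗ[F] Module.End F V)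
    (hr : ∀ x y : L, r (b x y) = r y * r x - r x * r y)
    (hlr : ∀ x y : L, l (b x y) = r y * l x - l x * r y)
    (hll : ∀ x y : L, l (b x y) = r y * l x + l x * l y)
    (A : Submodule F L) (x : L)
    (hx : ∀ a ∈ A, b x a ∈ A ∧ b a x ∈ A)
    (k : ℕ) :
    ∀ p : ℕ, 1 ≤ p →
      (⨆ j ∈ Finset.range (k + 1), A.map r * Submodule.span F {(r x) ^ j}) ^ p ≤
        ⨆ j ∈ Finset.range (p * k + 1),
          (A.map r) ^ p * Submodule.span F {(r x) ^ j} :=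
  Ek_pow_subset_general F L V b r hr A x hx k
end

section
/- Let L be a Leibniz algebra over F, (l,r,V) a representation of L on a finite-dimensional vector space V, A a subspace of L such that (r_A)^n = {0} for some integer n ≥ 1, and x ∈ n_L(A) such that r_x is nilpotent. Then there exists an integer N ≥ 1 such that (r_{A+Fx})^N = {0}. -/
open Submodule

/-- Let `(l,r,V)` be a representation of a Leibniz algebra `L`,
`A` a subspace of `L` with `(r_A)^n = 0` for some `n ≥ 1`, and `x ∈ n_L(A)`
with `r_x` nilpotent.  Then `(r_{A + Fx})^N = 0` for some `N ≥ 1`.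
Here `r_B = B.map r` for a subspace `B` of `L`, powers of subspaces of
`End(V)` are spans of products of their elements, and `A + Fx = A ⊔ span {x}`. -/
theorem nilpotent_rep_extend_by_normalizing_element
    (F L V : Type*) [Field F] [IsAlgClosed F] [CharZero F]
    [AddCommGroup L] [Module F L] [FiniteDimensional F L]
    [AddCommGroup V] [Module F V] [FiniteDimensional F V]
    (b : L →ₗ[F] L →ₗ[F] L)
    (hb : ∀ x y z : L, b x (b y z) = b (b x y) z - b (b x z) y)
    (l r : L →ₗ[F] Module.End F V)
    (hr : ∀ x y : L, r (b x y) = r y * r x - r x * r y)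
    (hlr : ∀ x y : L, l (b x y) = r y * l x - l x * r y)
    (hll : ∀ x y : L, l (b x y) = r y * l x + l x * l y)
    (A : Submodule F L) (x : L)
    (hx : ∀ a ∈ A, b x a ∈ A ∧ b a x ∈ A)
    (n : ℕ) (hn : 1 ≤ n) (hA : (A.map r) ^ n = ⊥)
    (hxnil : IsNilpotent (r x)) :
    ∃ N : ℕ, 1 ≤ N ∧ ((A ⊔ Submodule.span F {x}).map r) ^ N = ⊥ := by
  classical
  obtain ⟨k, hk⟩ := hxnil
  set R : Submodule F (Module.End F V) := A.map r with hRdef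
  set D : Submodule F (Module.End F V) := Submodule.span F {r x} with hDdef
  set m : ℕ := k + 1 with hmdef
  have hm1 : 1 ≤ m := Nat.succ_le_succ (Nat.zero_le _)
  have hρm : (r x) ^ m = 0 := by rw [hmdef, pow_succ, hk, zero_mul]
  have hDm : D ^ m = ⊥ := by
    rw [hDdef, Submodule.span_pow, Set.singleton_pow, hρm, Submodule.span_zero_singleton]
  have spow : ∀ (M : Submodule F (Module.End F V)) (j : ℕ), M ^ (j + 1) = M * M ^ j := by
    intro M j
    induction j with
    | zero => rw [Submodule.pow_one, Submodule.pow_zero, Submodule.mul_one]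
    | succ j ih =>
      rw [Submodule.pow_succ (n := j + 1), ih, mul_assoc, ← Submodule.pow_succ, ih]
  have spow_add : ∀ (M : Submodule F (Module.End F V)) (a c : ℕ),
      M ^ (a + c) = M ^ a * M ^ c := by
    intro M a c
    induction c with
    | zero => rw [Nat.add_zero, Submodule.pow_zero, Submodule.mul_one]
    | succ c ih =>
      rw [← Nat.add_assoc, Submodule.pow_succ, ih, mul_assoc, ← Submodule.pow_succ]
  -- the key commutation relation
  have hDR : D * R ≤ R * D ⊔ R := by
    rw [Submodule.mul_le]
    intro d hd s hs
    rw [Submodule.mem_span_singleton] at hd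
    obtain ⟨c, rfl⟩ := hd
    rw [hRdef, Submodule.mem_map] at hs
    obtain ⟨a, ha, rfl⟩ := hs
    have key : (c • r x) * r a = c • ((r a) * (r x) - r (b x a)) := by
      rw [hr x a, smul_mul_assoc, sub_sub_cancel]
    rw [key]
    refine Submodule.smul_mem _ c (sub_mem ?_ ?_)
    · exact Submodule.mem_sup_left (Submodule.mul_mem_mul
        (Submodule.mem_map_of_mem ha) (Submodule.mem_span_singleton_self _))
    · exact Submodule.mem_sup_right (Submodule.mem_map_of_mem (hx a ha).1)
  -- E j = span of powers of D up to j
  set E : ℕ → Submodule F (Module.End F V) :=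
    fun j => ⨆ i : ℕ, ⨆ _ : i ≤ j, D ^ i with hEdef
  have hE_le : ∀ i j : ℕ, i ≤ j → D ^ i ≤ E j := by
    intro i j h
    exact le_iSup₂ (f := fun i (_ : i ≤ j) => D ^ i) i h
  have hE_mono : ∀ j j' : ℕ, j ≤ j' → E j ≤ E j' := by
    intro j j' h
    exact iSup₂_le fun i hi => hE_le i j' (hi.trans h)
  have hE0 : (1 : Submodule F (Module.End F V)) ≤ E 0 := by
    have := hE_le 0 0 le_rfl
    rwa [Submodule.pow_zero] at this
  have hDE : ∀ j, D * E j ≤ E (j + 1) := by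
    intro j
    rw [hEdef]
    simp only [Submodule.mul_iSup]
    refine iSup₂_le fun i hi => ?_
    rw [← spow D i]
    exact hE_le (i + 1) (j + 1) (Nat.succ_le_succ hi)
  -- normal-form lemma: D^j * R ≤ R * E j
  have hpow : ∀ j : ℕ, D ^ j * R ≤ R * E j := by
    intro j
    induction j with
    | zero =>
      rw [Submodule.pow_zero, Submodule.one_mul]
      calc R = R * 1 := (Submodule.mul_one R).symm
        _ ≤ R * E 0 := mul_le_mul' le_rfl hE0
    | succ j ih =>
      calc D ^ (j + 1) * R = D * (D ^ j * R) := by rw [spow D j, mul_assoc]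
        _ ≤ D * (R * E j) := mul_le_mul' le_rfl ih
        _ = (D * R) * E j := (mul_assoc _ _ _).symm
        _ ≤ (R * D ⊔ R) * E j := mul_le_mul' hDR le_rfl
        _ = R * (D * E j) ⊔ R * E j := by rw [Submodule.sup_mul, mul_assoc]
        _ ≤ R * E (j + 1) ⊔ R * E (j + 1) :=
            sup_le_sup (mul_le_mul' le_rfl (hDE j))
              (mul_le_mul' le_rfl (hE_mono j (j + 1) (Nat.le_succ j)))
        _ = R * E (j + 1) := sup_idem _
  -- the weighted filtration
  set T : ℕ → Submodule F (Module.End F V) :=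
    fun N => ⨆ p : ℕ × ℕ, ⨆ _ : p.2 < m ∧ N ≤ p.1 * m + p.2, R ^ p.1 * D ^ p.2 with hTdef
  have hT_le : ∀ (N a j : ℕ), j < m → N ≤ a * m + j → R ^ a * D ^ j ≤ T N := by
    intro N a j h1 h2
    exact le_iSup₂ (f := fun (p : ℕ × ℕ) (_ : p.2 < m ∧ N ≤ p.1 * m + p.2) => R ^ p.1 * D ^ p.2)
      (a, j) ⟨h1, h2⟩
  have hTR : ∀ N : ℕ, T N * R ≤ T (N + 1) := by
    intro N
    rw [hTdef]
    simp only [Submodule.iSup_mul]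
    refine iSup₂_le fun p hp => ?_
    obtain ⟨a, j⟩ := p
    obtain ⟨h1, h2⟩ := hp
    replace h1 : j < m := h1
    replace h2 : N ≤ a * m + j := h2
    calc (R ^ a * D ^ j) * R = R ^ a * (D ^ j * R) := mul_assoc _ _ _
      _ ≤ R ^ a * (R * E j) := mul_le_mul' le_rfl (hpow j)
      _ = R ^ (a + 1) * E j := by rw [← mul_assoc, ← Submodule.pow_succ]
      _ ≤ T (N + 1) := by
          rw [hEdef]
          simp only [Submodule.mul_iSup]
          refine iSup₂_le fun i hi => ?_
          refine hT_le (N + 1) (a + 1) i (lt_of_le_of_lt hi h1) ?_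
          have : N + 1 ≤ (a + 1) * m := by
            calc N + 1 ≤ a * m + j + 1 := Nat.succ_le_succ h2
              _ ≤ a * m + m := by omega
              _ = (a + 1) * m := by ring
          omega
  have hTD : ∀ N : ℕ, T N * D ≤ T (N + 1) := by
    intro N
    rw [hTdef]
    simp only [Submodule.iSup_mul]
    refine iSup₂_le fun p hp => ?_
    obtain ⟨a, j⟩ := p
    obtain ⟨h1, h2⟩ := hp
    replace h1 : j < m := h1
    replace h2 : N ≤ a * m + j := h2
    have heq : (R ^ a * D ^ j) * D = R ^ a * D ^ (j + 1) := by
      rw [mul_assoc, ← Submodule.pow_succ]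
    rw [heq]
    by_cases hjm : j + 1 < m
    · exact hT_le (N + 1) a (j + 1) hjm (by omega)
    · have : j + 1 = m := by omega
      rw [this, hDm, Submodule.mul_bot]
      exact bot_le
  -- main induction
  have hmain : ∀ N : ℕ, (R ⊔ D) ^ N ≤ T N := by
    intro N
    induction N with
    | zero =>
      rw [Submodule.pow_zero]
      have h1 : (1 : Submodule F (Module.End F V)) = R ^ 0 * D ^ 0 := by
        rw [Submodule.pow_zero, Submodule.pow_zero, Submodule.one_mul]
      rw [h1]
      exact hT_le 0 0 0 hm1 (by omega)
    | succ N ih =>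
      calc (R ⊔ D) ^ (N + 1) = (R ⊔ D) ^ N * (R ⊔ D) := rfl
        _ ≤ T N * (R ⊔ D) := mul_le_mul' ih le_rfl
        _ = T N * R ⊔ T N * D := Submodule.mul_sup _ _ _
        _ ≤ T (N + 1) := sup_le (hTR N) (hTD N)
  -- conclude
  refine ⟨n * m, le_trans (by norm_num) (Nat.mul_le_mul hn hm1), ?_⟩
  have hmap : (A ⊔ Submodule.span F {x}).map r = R ⊔ D := by
    rw [Submodule.map_sup, Submodule.map_span, Set.image_singleton]
  rw [hmap, ← le_bot_iff]
  refine le_trans (hmain (n * m)) ?_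
  rw [hTdef]
  refine iSup₂_le fun p hp => ?_
  obtain ⟨a, j⟩ := p
  obtain ⟨h1, h2⟩ := hp
  replace h1 : j < m := h1
  replace h2 : n * m ≤ a * m + j := h2
  show R ^ a * D ^ j ≤ ⊥
  have han : n ≤ a := by
    by_contra hcon
    push_neg at hcon
    have : a + 1 ≤ n := hcon
    have h3 : (a + 1) * m ≤ n * m := Nat.mul_le_mul_right m this
    have h5 : (a + 1) * m = a * m + m := by ring
    omega
  have : a = n + (a - n) := by omega
  rw [this, spow_add, hA, Submodule.bot_mul, Submodule.bot_mul]
end
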